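/- arXiv:2009.06563 — 2 statements merged into one kernel-verified Lean document; each statement's English description precedes it below -/
import Mathlib

section
/- For the q-derivative D_q acting on the variable a, and any nonnegative integer n, D_q^n { (as;q)_∞ / (aω;q)_∞ } = (ω/(1-q))^n · ((s/ω;q)_n / (as;q)_n) · (as;q)_∞/(aω;q)_∞, valid where all products converge and are nonzero. -/
noncomputable def qPoch (x q : ℂ) (n : ℕ) : ℂ := ∏ j ∈ Finset.range n, (1 - x * q ^ j)

noncomputable def qPochInf (x q : ℂ) : ℂ := ∏' j : ℕ, (1 - x * q ^ j)

noncomputable def qBinom (q : ℂ) (n k : ℕ) : ℂ := qPoch q q n / (qPoch q q k * qPoch q q (n - k))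

noncomputable def Dq (q : ℂ) (f : ℂ → ℂ) : ℂ → ℂ := fun a => (f a - f (q * a)) / ((1 - q) * a)

noncomputable def Dqinv (q : ℂ) (f : ℂ → ℂ) : ℂ → ℂ := fun a => (f (q⁻¹ * a) - f a) / ((q⁻¹ - 1) * a)

noncomputable def mPoch {m : ℕ} (a : Fin m → ℂ) (q : ℂ) (k : ℕ) : ℂ := ∏ i, qPoch (a i) q k

noncomputable def phi {r : ℕ} (a : Fin (r + 1) → ℂ) (b : Fin r → ℂ) (q x y : ℂ) (n : ℕ) : ℂ :=
  ∑ k ∈ Finset.range (n + 1), qBinom q n k * (mPoch a q k / mPoch b q k) * x ^ k * y ^ (n - k)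

noncomputable def psi {r : ℕ} (a : Fin (r + 1) → ℂ) (b : Fin r → ℂ) (q x y : ℂ) (n : ℕ) : ℂ :=
  ∑ k ∈ Finset.range (n + 1), qBinom q n k * (mPoch a q k / mPoch b q k) *
    q ^ ((((k + 1).choose 2 : ℕ) : ℤ) - (n : ℤ) * (k : ℤ)) * x ^ k * y ^ (n - k)

/-! Writing `F_t(a) = (at;q)_∞ / (aω;q)_∞`, peeling off the first factor of each product gives
`F_t(a) - F_t(qa) = a (ω - t) F_{qt}(a)`, i.e. `D_q F_t = (ω - t)/(1 - q) · F_{qt}`.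
Iterating from `t = s` yields `D_q^n F_s = ∏_{j<n} (ω - s q^j)/(1 - q) · F_{s q^n}`, and
`(as;q)_∞ = (as;q)_n (as q^n;q)_∞` turns this into the stated formula. -/

open Finset

lemma multipliable_one_sub_mul_pow (x : ℂ) {q : ℂ} (hq : ‖q‖ < 1) :
    Multipliable fun j : ℕ => 1 - x * q ^ j := by
  simp_rw [sub_eq_add_neg, ← neg_mul]
  apply multipliable_one_add_of_summable
  simpa [norm_mul, norm_pow] using (summable_geometric_of_lt_one (norm_nonneg q) hq).mul_left ‖x‖

lemma qPoch_mul_qPochInf (x : ℂ) {q : ℂ} (hq : ‖q‖ < 1) (n : ℕ) :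
    qPoch x q n * qPochInf (x * q ^ n) q = qPochInf x q := by
  have hshift : ∀ j, 1 - x * q ^ n * q ^ j = 1 - x * q ^ (j + n) := fun j => by ring
  simp only [qPoch, qPochInf, hshift]
  refine Multipliable.prod_mul_tprod_nat_mul' ?_
  simpa only [hshift] using multipliable_one_sub_mul_pow (x * q ^ n) hq

lemma qPochInf_eq_one_sub_mul (x : ℂ) {q : ℂ} (hq : ‖q‖ < 1) :
    qPochInf x q = (1 - x) * qPochInf (x * q) q := by
  simpa [qPoch] using (qPoch_mul_qPochInf x hq 1).symm

lemma Dq_qPochInf_div_qPochInf {q : ℂ} (hq : ‖q‖ < 1) (t ω : ℂ) {a : ℂ} (ha : a ≠ 0)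
    (haω : 1 - a * ω ≠ 0) :
    Dq q (fun b => qPochInf (b * t) q / qPochInf (b * ω) q) a
      = (ω - t) / (1 - q) * (qPochInf (a * (t * q)) q / qPochInf (a * ω) q) := by
  have hq1 : 1 - q ≠ 0 := sub_ne_zero.mpr fun h => by simp [← h] at hq
  simp only [Dq]
  rw [qPochInf_eq_one_sub_mul (a * t) hq, qPochInf_eq_one_sub_mul (a * ω) hq,
    show q * a * t = a * (t * q) by ring, show q * a * ω = a * ω * q by ring]
  rcases eq_or_ne (qPochInf (a * ω * q) q) 0 with h0 | h0
  · simp [h0]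
  · field_simp
    ring

lemma iterate_Dq_qPochInf_div_qPochInf {q : ℂ} (hq0 : q ≠ 0) (hq : ‖q‖ < 1) (s ω : ℂ) (n : ℕ)
    {a : ℂ} (ha : a ≠ 0) (haω : ‖a * ω‖ < 1) :
    (Dq q)^[n] (fun b => qPochInf (b * s) q / qPochInf (b * ω) q) a
      = (∏ j ∈ range n, (ω - s * q ^ j)) / (1 - q) ^ n
          * (qPochInf (a * (s * q ^ n)) q / qPochInf (a * ω) q) := by
  induction n generalizing a with
  | zero => simp
  | succ n ih =>
    have hqa : ‖q * a * ω‖ < 1 := by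
      rw [mul_assoc, norm_mul]
      exact lt_of_le_of_lt (mul_le_of_le_one_left (norm_nonneg _) hq.le) haω
    have haω' : 1 - a * ω ≠ 0 := sub_ne_zero.mpr fun h => by simp [← h] at haω
    have hstep := Dq_qPochInf_div_qPochInf hq (s * q ^ n) ω ha haω'
    rw [Function.iterate_succ_apply']
    simp only [Dq] at hstep ⊢
    rw [ih ha haω, ih (mul_ne_zero hq0 ha) hqa, ← mul_sub, mul_div_assoc, hstep,
      prod_range_succ, pow_succ q n, ← mul_assoc s]
    generalize 1 - q = c
    ring

lemma prod_sub_mul_pow_eq_pow_mul_qPoch (q s : ℂ) {ω : ℂ} (hω : ω ≠ 0) (n : ℕ) :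
    ∏ j ∈ range n, (ω - s * q ^ j) = ω ^ n * qPoch (s / ω) q n := by
  rw [qPoch, ← card_range n, ← prod_const, card_range, ← prod_mul_distrib]
  refine prod_congr rfl fun j _ => ?_
  field_simp

/-- `D_q^n {(as;q)_∞/(aω;q)_∞}`. -/
theorem stmt6 (q a s ω : ℂ) (hq0 : q ≠ 0) (hq1 : ‖q‖ < 1) (ha : a ≠ 0)
    (hω : ω ≠ 0) (haω : ‖a * ω‖ < 1) (n : ℕ) (hs : qPoch (a * s) q n ≠ 0) :
    (Dq q)^[n] (fun a => qPochInf (a * s) q / qPochInf (a * ω) q) a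
      = (ω / (1 - q)) ^ n * (qPoch (s / ω) q n / qPoch (a * s) q n)
          * (qPochInf (a * s) q / qPochInf (a * ω) q) := by
  rw [iterate_Dq_qPochInf_div_qPochInf hq0 hq1 s ω n ha haω,
    prod_sub_mul_pow_eq_pow_mul_qPoch q s hω, ← qPoch_mul_qPochInf (a * s) hq1 n, ← mul_assoc a,
    div_pow]
  generalize qPoch (a * s) q n = P at hs
  field_simp
end

section
/- The q-Chu-Vandermonde formula: for nonnegative integer n, ∑_{k=0}^n ((q^{-n};q)_k (a;q)_k / ((c;q)_k (q;q)_k)) · (c q^n / a)^k = (c/a;q)_n / (c;q)_n. -/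
lemma qPoch_succ (x q : ℂ) (n : ℕ) : qPoch x q (n+1) = qPoch x q n * (1 - x * q ^ n) :=
  Finset.prod_range_succ _ _

lemma qPoch_add (x q : ℂ) (m k : ℕ) :
    qPoch x q (m + k) = qPoch x q m * qPoch (x * q ^ m) q k := by
  induction k with
  | zero => simp [qPoch]
  | succ k ih =>
    rw [← Nat.add_assoc, qPoch_succ, ih, qPoch_succ, pow_add]
    ring

noncomputable def gb (q : ℂ) : ℕ → ℕ → ℂ
  | 0, 0 => 1
  | 0, _+1 => 0
  | _+1, 0 => 1
  | n+1, k+1 => q ^ (k+1) * gb q n (k+1) + gb q n k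

lemma gb_eq_zero (q : ℂ) : ∀ n k : ℕ, n < k → gb q n k = 0 := by
  intro n
  induction n with
  | zero => intro k hk; match k, hk with | k+1, _ => rfl
  | succ n ih =>
    intro k hk
    match k, hk with
    | k+1, hk =>
      show q ^ (k+1) * gb q n (k+1) + gb q n k = 0
      rw [ih (k+1) (by omega), ih k (by omega)]
      ring

lemma gb_self (q : ℂ) : ∀ n : ℕ, gb q n n = 1 := by
  intro n
  induction n with
  | zero => rfl
  | succ n ih =>
    show q ^ (n+1) * gb q n (n+1) + gb q n n = 1
    rw [gb_eq_zero q n (n+1) (by omega), ih]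
    ring

lemma gb_mul (q : ℂ) : ∀ n k : ℕ, k ≤ n →
    gb q n k * (qPoch q q k * qPoch q q (n - k)) = qPoch q q n := by
  intro n
  induction n with
  | zero => intro k hk; interval_cases k; simp [gb, qPoch]
  | succ n ih =>
    intro k hk
    match k with
    | 0 =>
      show (1 : ℂ) * (qPoch q q 0 * qPoch q q (n+1-0)) = qPoch q q (n+1)
      simp [qPoch]
    | k+1 =>
      show (q ^ (k+1) * gb q n (k+1) + gb q n k) * (qPoch q q (k+1) * qPoch q q (n+1-(k+1))) = qPoch q q (n+1)
      rcases Nat.lt_or_ge k n with h | h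
      · have e1 := ih (k+1) h
        have e2 := ih k (by omega)
        have h3 : n + 1 - (k+1) = (n - (k+1)) + 1 := by omega
        have h4 : n - k = (n - (k+1)) + 1 := by omega
        rw [h4, qPoch_succ] at e2
        rw [h3, qPoch_succ q q (n-(k+1)), qPoch_succ q q k, qPoch_succ q q n, pow_succ']
        rw [qPoch_succ q q k] at e1
        have hA : (q : ℂ) * q ^ k * (q * q ^ (n-(k+1))) = q * q ^ n := by
          rw [← pow_succ', ← pow_succ', ← pow_succ', ← pow_add]
          congr 1
          omega
        linear_combination (q * q^k * (1 - q * q^(n-(k+1)))) * e1 + (1 - q * q^k) * e2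
          - qPoch q q n * hA
      · have hk' : k = n := by omega
        subst hk'
        rw [gb_eq_zero q k (k+1) (by omega), gb_self, Nat.sub_self]
        simp [qPoch]

lemma qPoch_one (x q : ℂ) : qPoch x q 1 = 1 - x := by simp [qPoch]

lemma qPoch_congr (x y q : ℂ) (n : ℕ) (h : x = y) : qPoch x q n = qPoch y q n := by rw [h]

lemma step (q a c : ℂ) (n k : ℕ) (hk : k ≤ n) :
    q^k * (q ^ (k.choose 2) * (-c)^k * a^(n+1-k) * qPoch a q k * qPoch (c*q^k) q (n+1-k))
      + q ^ ((k+1).choose 2) * (-c)^(k+1) * a^(n+1-(k+1)) * qPoch a q (k+1) * qPoch (c*q^(k+1)) q (n+1-(k+1))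
    = (a - c) * (q ^ (k.choose 2) * (-(c*q))^k * a^(n-k) * qPoch a q k * qPoch ((c*q)*q^k) q (n-k)) := by
  have h1 : n+1-k = 1+(n-k) := by omega
  have h2 : n+1-(k+1) = n-k := by omega
  have h3 : qPoch (c*q^k*q^1) q (n-k) = qPoch (c*q*q^k) q (n-k) :=
    qPoch_congr _ _ _ _ (by ring)
  have h4 : qPoch (c*q^(k+1)) q (n-k) = qPoch (c*q*q^k) q (n-k) :=
    qPoch_congr _ _ _ _ (by ring)
  have h5 : (k+1).choose 2 = k.choose 2 + k := by
    rw [Nat.choose_succ_succ, Nat.choose_one_right, Nat.add_comm]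
  rw [h1, h2, qPoch_add (c*q^k) q 1 (n-k), qPoch_one, h3, qPoch_succ a q k, h4, h5,
    pow_add q (k.choose 2) k, pow_add a 1 (n-k), pow_one, neg_mul_eq_neg_mul, mul_pow]
  ring

lemma key (q a : ℂ) : ∀ (n : ℕ) (c : ℂ),
    ∑ k ∈ Finset.range (n+1),
        gb q n k * (q ^ (k.choose 2) * (-c)^k * a^(n-k) * qPoch a q k * qPoch (c*q^k) q (n-k))
      = ∏ j ∈ Finset.range n, (a - c * q^j) := by
  intro n
  induction n with
  | zero => intro c; simp [gb, qPoch]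
  | succ n ih =>
    intro c
    set f : ℕ → ℂ := fun k =>
      q ^ (k.choose 2) * (-c)^k * a^(n+1-k) * qPoch a q k * qPoch (c*q^k) q (n+1-k) with hf
    have hsplit : ∀ k, gb q (n+1) k = q^k * gb q n k + (if k = 0 then 0 else gb q n (k-1)) := by
      intro k
      cases k with
      | zero => show (1:ℂ) = q^0 * gb q n 0 + 0; cases n <;> simp [gb]
      | succ k => show q^(k+1) * gb q n (k+1) + gb q n k = _; simp
    calc ∑ k ∈ Finset.range (n+1+1), gb q (n+1) k * f k
        = ∑ k ∈ Finset.range (n+1+1), (q^k * gb q n k * f k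
            + (if k = 0 then 0 else gb q n (k-1)) * f k) := by
          refine Finset.sum_congr rfl fun k _ => ?_
          rw [hsplit k]; ring
      _ = ∑ k ∈ Finset.range (n+1+1), q^k * gb q n k * f k
            + ∑ k ∈ Finset.range (n+1+1), (if k = 0 then 0 else gb q n (k-1)) * f k :=
          Finset.sum_add_distrib
      _ = ∑ k ∈ Finset.range (n+1), q^k * gb q n k * f k
            + ∑ k ∈ Finset.range (n+1), gb q n k * f (k+1) := by
          rw [Finset.sum_range_succ (fun k => q^k * gb q n k * f k) (n+1),
            Finset.sum_range_succ' (fun k => (if k = 0 then 0 else gb q n (k-1)) * f k) (n+1),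
            gb_eq_zero q n (n+1) (by omega)]
          simp
      _ = ∑ k ∈ Finset.range (n+1), gb q n k * (q^k * f k + f (k+1)) := by
          rw [← Finset.sum_add_distrib]
          refine Finset.sum_congr rfl fun k _ => ?_
          ring
      _ = (a - c) * ∑ k ∈ Finset.range (n+1),
            gb q n k * (q ^ (k.choose 2) * (-(c*q))^k * a^(n-k) * qPoch a q k
              * qPoch ((c*q)*q^k) q (n-k)) := by
          rw [Finset.mul_sum]
          refine Finset.sum_congr rfl fun k hk => ?_
          rw [hf]
          simp only []
          rw [step q a c n k (by simpa using Nat.lt_succ_iff.mp (Finset.mem_range.mp hk))]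
          ring
      _ = (a - c) * ∏ j ∈ Finset.range n, (a - (c*q) * q^j) := by rw [ih (c*q)]
      _ = ∏ j ∈ Finset.range (n+1), (a - c * q^j) := by
          rw [Finset.prod_range_succ']
          have hj : ∀ j ∈ Finset.range n, (a - c * q^(j+1)) = (a - (c*q)*q^j) := by
            intro j _
            rw [pow_succ']
            ring
          rw [Finset.prod_congr rfl hj]
          simp only [pow_zero, mul_one]
          ring

lemma sum_id_choose (k : ℕ) : ∑ j ∈ Finset.range k, j = k.choose 2 := by
  have h := Finset.sum_range_id_mul_two k
  rw [Nat.choose_two_right]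
  omega

lemma L2 (q : ℂ) (hq0 : q ≠ 0) (n k : ℕ) (hk : k ≤ n) :
    q^(n*k) * qPoch (q ^ (-(n:ℤ))) q k
      = (-1)^k * q^(k.choose 2) * qPoch (q * q^(n-k)) q k := by
  calc q^(n*k) * qPoch (q ^ (-(n:ℤ))) q k
      = ∏ j ∈ Finset.range k, ((q:ℂ)^n - q^j) := by
        have hc : ((q:ℂ)^n)^k = ∏ _j ∈ Finset.range k, (q:ℂ)^n := by
          rw [Finset.prod_const, Finset.card_range]
        rw [qPoch, pow_mul, hc, ← Finset.prod_mul_distrib]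
        refine Finset.prod_congr rfl fun j _ => ?_
        have h : (q:ℂ)^n * (q ^ (-(n:ℤ)) * q^j) = q^j := by
          rw [← zpow_natCast q n, ← mul_assoc, ← zpow_add₀ hq0]
          simp
        rw [mul_sub, mul_one, h]
    _ = ∏ j ∈ Finset.range k, ((q:ℂ)^n - q^(k-1-j)) :=
        (Finset.prod_range_reflect (fun j => (q:ℂ)^n - q^j) k).symm
    _ = ∏ j ∈ Finset.range k, (-(q^(k-1-j)) * (1 - q * q^(n-k) * q^j)) := by
        refine Finset.prod_congr rfl fun j hj => ?_
        have hj' : j < k := Finset.mem_range.mp hj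
        have h : (q:ℂ)^(k-1-j) * (q * q^(n-k) * q^j) = q^n := by
          rw [show (q:ℂ)^(k-1-j) * (q * q^(n-k) * q^j)
              = q^((k-1-j) + (1 + (n-k) + j)) by
            rw [pow_add, pow_add, pow_add, pow_one]; try ring]
          congr 1
          omega
        linear_combination -h
    _ = (∏ j ∈ Finset.range k, -((q:ℂ)^(k-1-j))) * qPoch (q * q^(n-k)) q k := by
        rw [Finset.prod_mul_distrib, qPoch]
    _ = (-1)^k * q^(k.choose 2) * qPoch (q * q^(n-k)) q k := by
        congr 1
        rw [Finset.prod_range_reflect (fun j => -((q:ℂ)^j)) k]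
        rw [show (fun j => -((q:ℂ)^j)) = fun j => (-1) * (q:ℂ)^j by funext j; ring]
        rw [Finset.prod_mul_distrib, Finset.prod_const, Finset.card_range,
          Finset.prod_pow_eq_pow_sum, sum_id_choose]

/-- the q-Chu-Vandermonde formula. -/
theorem stmt8 (q a c : ℂ) (hq0 : q ≠ 0) (hq : ∀ m : ℕ, 0 < m → q ^ m ≠ 1) (ha : a ≠ 0)
    (n : ℕ) (hc : ∀ k ≤ n, qPoch c q k ≠ 0) :
    ∑ k ∈ Finset.range (n + 1),
        qPoch (q ^ (-(n : ℤ))) q k * qPoch a q k / (qPoch c q k * qPoch q q k)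
          * (c * q ^ n / a) ^ k
      = qPoch (c / a) q n / qPoch c q n := by
  have hP : ∀ m : ℕ, qPoch q q m ≠ 0 := by
    intro m
    rw [qPoch]
    refine Finset.prod_ne_zero_iff.mpr fun j _ => ?_
    intro h0
    refine hq (j+1) (Nat.succ_pos j) ?_
    rw [pow_succ']
    exact (sub_eq_zero.mp h0).symm
  have hCn := hc n le_rfl
  have hM : qPoch c q n * a^n ≠ 0 := mul_ne_zero hCn (pow_ne_zero _ ha)
  apply mul_right_cancel₀ hM
  rw [Finset.sum_mul]
  have main :
      ∑ k ∈ Finset.range (n+1),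
        qPoch (q ^ (-(n : ℤ))) q k * qPoch a q k / (qPoch c q k * qPoch q q k)
          * (c * q ^ n / a) ^ k * (qPoch c q n * a^n)
      = ∏ j ∈ Finset.range n, (a - c * q^j) := by
    rw [← key q a n c]
    refine Finset.sum_congr rfl fun k hk => ?_
    have hkn : k ≤ n := Nat.lt_succ_iff.mp (Finset.mem_range.mp hk)
    have hCk := hc k hkn
    have hPk := hP k
    have hPnk := hP (n-k)
    have e1 : qPoch c q n = qPoch c q k * qPoch (c*q^k) q (n-k) := by
      have h := qPoch_add c q k (n-k)
      rwa [show k + (n-k) = n by omega] at h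
    have e2 : qPoch q q n = qPoch q q (n-k) * qPoch (q*q^(n-k)) q k := by
      have h := qPoch_add q q (n-k) k
      rwa [show (n-k) + k = n by omega] at h
    have e3 := L2 q hq0 n k hkn
    have e4 := gb_mul q n k hkn
    have hR : qPoch (q*q^(n-k)) q k = gb q n k * qPoch q q k := by
      apply mul_right_cancel₀ hPnk
      linear_combination -e4 - e2
    rw [hR] at e3
    have hq' : qPoch (q ^ (-(n : ℤ))) q k
        = (-1)^k * q^(k.choose 2) * (gb q n k * qPoch q q k) / q^(n*k) := by
      rw [eq_div_iff (pow_ne_zero _ hq0)]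
      linear_combination e3
    have ean : a^n = a^(n-k) * a^k := by
      rw [← pow_add]
      congr 1
      omega
    rw [hq', e1, ean, div_pow, mul_pow, ← pow_mul]
    field_simp
    ring
  have rhs : qPoch (c/a) q n / qPoch c q n * (qPoch c q n * a^n)
      = ∏ j ∈ Finset.range n, (a - c * q^j) := by
    have h1 : qPoch (c/a) q n / qPoch c q n * (qPoch c q n * a^n)
        = qPoch (c/a) q n * a^n := by
      field_simp
    rw [h1, qPoch, show a^n = ∏ _j ∈ Finset.range n, a by
        rw [Finset.prod_const, Finset.card_range],
      ← Finset.prod_mul_distrib]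
    refine Finset.prod_congr rfl fun j _ => ?_
    field_simp
  rw [main, rhs]
end
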